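/- (Orthogonality of Hahn polynomials from the algebra) With Q_{k,l} = ₃F₂(−k,k+λ₁+λ₂−1,−l; λ₁,−N; 1) and tilde-Q_{k,l} = [binom(N,l)(λ₁)_l(λ₂)_{N−l}/(λ₂)_N] · [binom(N,k)(λ₁)_k(λ₁+λ₂)_N/((λ₂)_k(λ₁+λ₂+k−1)_k(λ₁+λ₂+2k)_{N−k})] · Q_{k,l}, one has ∑_{k=0}^{N} Q_{k,l} tilde-Q_{k,l'} = δ_{l,l'} (λ₁+λ₂)_N/(λ₂)_N and ∑_{l=0}^{N} Q_{k,l} tilde-Q_{k',l} = δ_{k,k'} (λ₁+λ₂)_N/(λ₂)_N, for all 0 ≤ k,k',l,l' ≤ N, assuming λ₁, λ₂ ∉ {0,...,−(N−1)} and λ₁+λ₂ ∉ {0,...,−(2N−2)}. -/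

import Mathlib

/-!
The Hahn polynomials `Q_k(x) = ₃F₂(-k, k + λ₁ + λ₂ - 1, -x; λ₁, -N; 1)` are eigenfunctions, with
eigenvalues `k (k + λ₁ + λ₂ - 1)`, of a second-order difference operator in `x` which, by the
Pearson relation of the weight `w(l) = C(N, l) (λ₁)_l (λ₂)_{N-l}`, is self-adjoint for the
pairing `∑_{l ≤ N} w(l) f(l) g(l)`. Distinct eigenvalues give orthogonality. The squared norms
follow by induction on `k`: the forward difference of `Q_{k+1}` is a multiple of `Q_k` with
parameters `(λ₁ + 1, λ₂ + 1, N - 1)`, and `w` times the forward coefficient of the operator is a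
multiple of the shifted weight; the case `k = 0` is Chu–Vandermonde. Hence the matrices
`(Q_{k,l})` and `(Q̃_{k,l})ᵀ` are inverse up to a scalar, and a one-sided inverse of a square
matrix is two-sided, which gives the dual relation.
-/

open Finset

/-- Rising Pochhammer symbol `(x)_m = x(x+1)⋯(x+m-1)` over `ℂ`. -/
noncomputable def poch (x : ℂ) (m : ℕ) : ℂ := (ascPochhammer ℂ m).eval x

/-- Hahn polynomial value `Q_{k,l} = ₃F₂(-k, k+λ₁+λ₂-1, -l; λ₁, -N; 1)`. -/
noncomputable def hahnQ (lam1 lam2 : ℂ) (N k l : ℕ) : ℂ :=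
  ∑ n ∈ range (k + 1),
    poch (-(k : ℂ)) n * poch ((k : ℂ) + lam1 + lam2 - 1) n * poch (-(l : ℂ)) n /
      (poch lam1 n * poch (-(N : ℂ)) n * (n.factorial : ℂ))

/-- Renormalised Hahn value `Q̃_{k,l}`. -/
noncomputable def hahnQt (lam1 lam2 : ℂ) (N k l : ℕ) : ℂ :=
  ((N.choose l : ℂ) * poch lam1 l * poch lam2 (N - l) / poch lam2 N) *
    ((N.choose k : ℂ) * poch lam1 k * poch (lam1 + lam2) N /
      (poch lam2 k * poch (lam1 + lam2 + (k : ℂ) - 1) k *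
        poch (lam1 + lam2 + 2 * (k : ℂ)) (N - k))) *
    hahnQ lam1 lam2 N k l

theorem poch_zero (x : ℂ) : poch x 0 = 1 := by
  simp [poch]

theorem poch_succ_right (x : ℂ) (n : ℕ) : poch x (n + 1) = poch x n * (x + n) :=
  ascPochhammer_succ_eval n x

theorem poch_succ_left (x : ℂ) (n : ℕ) : poch x (n + 1) = x * poch (x + 1) n := by
  simp [poch, ascPochhammer_succ_left, Polynomial.eval_comp]

theorem poch_ne_zero_iff {x : ℂ} {n : ℕ} : poch x n ≠ 0 ↔ ∀ i < n, x + i ≠ 0 := by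
  simp only [poch, ne_eq, ascPochhammer_eval_eq_zero_iff, not_exists, not_and]
  exact forall₂_congr fun i _ => by rw [eq_neg_iff_add_eq_zero, add_comm]

theorem poch_ne_zero_of_le {x : ℂ} {m n : ℕ} (hmn : m ≤ n) (hx : poch x n ≠ 0) : poch x m ≠ 0 :=
  poch_ne_zero_iff.mpr fun i hi => poch_ne_zero_iff.mp hx i (hi.trans_le hmn)

theorem poch_neg_add_one_sub (x : ℂ) (n : ℕ) :
    poch (-(x + 1)) (n + 1) - poch (-x) (n + 1) = -(n + 1) * poch (-x) n := by
  rw [poch_succ_left, neg_add', sub_add_cancel, poch_succ_right]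
  ring

theorem poch_add_eq_sum (a b : ℂ) (M : ℕ) :
    poch (a + b) M = ∑ l ∈ range (M + 1), (M.choose l : ℂ) * poch a l * poch b (M - l) := by
  have hdesc (r : ℂ) (k : ℕ) : (descPochhammer ℤ k).smeval r = (descPochhammer ℂ k).eval r := by
    rw [← Polynomial.aeval_eq_smeval, Polynomial.aeval_def, Polynomial.eval₂_eq_eval_map,
      descPochhammer_map]
  have hpoch (r : ℂ) (k : ℕ) : poch r k = (-1) ^ k * (descPochhammer ℂ k).eval (-r) := by
    rw [poch, ← ascPochhammer_eval_neg_eq_descPochhammer, neg_neg]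
  rw [hpoch, neg_add, ← hdesc, Ring.descPochhammer_smeval_add _ (Commute.all _ _),
    Nat.sum_antidiagonal_eq_sum_range_succ (fun i j => (M.choose i : ℂ) *
      ((descPochhammer ℤ i).smeval (-a) * (descPochhammer ℤ j).smeval (-b))), mul_sum]
  refine sum_congr rfl fun l hl => ?_
  rw [hpoch a, hpoch b, hdesc, hdesc, show (-1 : ℂ) ^ M = (-1) ^ l * (-1) ^ (M - l) by
    rw [← pow_add, Nat.add_sub_cancel' (mem_range_succ_iff.mp hl)]]
  ring

noncomputable def hahnWeight (l1 l2 : ℂ) (N l : ℕ) : ℂ :=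
  N.choose l * poch l1 l * poch l2 (N - l)

theorem sum_hahnWeight (l1 l2 : ℂ) (N : ℕ) :
    ∑ l ∈ range (N + 1), hahnWeight l1 l2 N l = poch (l1 + l2) N :=
  (poch_add_eq_sum l1 l2 N).symm

theorem hahnWeight_succ_mul {l1 l2 : ℂ} {N l : ℕ} (hl : l < N) :
    hahnWeight l1 l2 N (l + 1) * ((l + 1) * (l + 1 - l2 - N)) =
      hahnWeight l1 l2 N l * ((l + l1) * (l - N)) := by
  have hchoose : (N.choose (l + 1) : ℂ) * (l + 1) = N.choose l * (N - l) := by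
    have := congrArg (Nat.cast : ℕ → ℂ) (Nat.choose_succ_right_eq N l)
    push_cast [Nat.cast_sub hl.le] at this
    exact this
  obtain ⟨m, rfl⟩ := Nat.exists_eq_add_of_lt hl
  simp only [hahnWeight, show l + m + 1 - l = m + 1 by omega, show l + m + 1 - (l + 1) = m by omega,
    poch_succ_right]
  push_cast at hchoose ⊢
  linear_combination poch l1 l * (l1 + l) * poch l2 m * (l + 1 - l2 - (l + m + 1)) * hchoose

theorem hahnWeight_mul_eq {l1 l2 : ℂ} {N l : ℕ} (hl : l ≤ N) :
    hahnWeight l1 l2 (N + 1) l * ((l + l1) * (l - (N + 1 : ℕ))) =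
      -(l1 * l2 * (N + 1 : ℕ)) * hahnWeight (l1 + 1) (l2 + 1) N l := by
  obtain ⟨n, rfl⟩ := Nat.exists_eq_add_of_le hl
  have hchoose : ((l + n + 1).choose l : ℂ) * (n + 1) = (l + n + 1) * (l + n).choose l := by
    have := congrArg (Nat.cast : ℕ → ℂ) (Nat.choose_mul_succ_eq (l + n) l)
    push_cast [show l + n + 1 - l = n + 1 by omega] at this
    linear_combination -this
  have hl1 : poch l1 l * (l + l1) = l1 * poch (l1 + 1) l := by
    rw [add_comm (l : ℂ), ← poch_succ_right, poch_succ_left]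
  simp only [hahnWeight, show l + n + 1 - l = n + 1 by omega, show l + n - l = n by omega,
    poch_succ_left l2]
  push_cast
  linear_combination (l2 * poch (l2 + 1) n * (-(n + 1 : ℂ)) * (l + n + 1).choose l) * hl1 -
    l1 * poch (l1 + 1) l * l2 * poch (l2 + 1) n * hchoose

/-- Discrete Green identity; `hbd` is the Pearson relation of the weight `w`. -/
theorem sum_mul_diffOp_mul {R : Type*} [CommRing R] (N : ℕ) (w : ℕ → R) (b d f g : R → R)
    (hb : b N = 0) (hd : d 0 = 0) (hbd : ∀ l < N, w (l + 1) * d (l + 1) = w l * b l) :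
    ∑ l ∈ range (N + 1), w l * (b l * (f (l + 1) - f l) + d l * (f (l - 1) - f l)) * g l =
      -∑ l ∈ range N, w l * b l * (f (l + 1) - f l) * (g (l + 1) - g l) := by
  have hforward : ∑ l ∈ range (N + 1), w l * b l * (f (l + 1) - f l) * g l =
      ∑ l ∈ range N, w l * b l * (f (l + 1) - f l) * g l := by
    rw [sum_range_succ, hb]
    ring
  have hbackward : ∑ l ∈ range (N + 1), w l * d l * (f (l - 1) - f l) * g l =
      ∑ l ∈ range N, w l * b l * (f l - f (l + 1)) * g (l + 1) := by
    rw [sum_range_succ', Nat.cast_zero, hd, mul_zero, zero_mul, zero_mul, add_zero]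
    refine sum_congr rfl fun l hl => ?_
    rw [← hbd l (mem_range.mp hl)]
    push_cast
    ring_nf
  calc _ = ∑ l ∈ range (N + 1), w l * b l * (f (l + 1) - f l) * g l +
        ∑ l ∈ range (N + 1), w l * d l * (f (l - 1) - f l) * g l := by
        rw [← sum_add_distrib]
        exact sum_congr rfl fun l _ => by ring
    _ = _ := by
        rw [hforward, hbackward, ← sum_add_distrib, ← sum_neg_distrib]
        exact sum_congr rfl fun l _ => by ring

section HahnOperator

variable (l1 l2 : ℂ) (N : ℕ)

noncomputable def hahnOp (f : ℂ → ℂ) (x : ℂ) : ℂ :=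
  (x + l1) * (x - N) * (f (x + 1) - f x) + x * (x - l2 - N) * (f (x - 1) - f x)

noncomputable def hahnInner (f g : ℂ → ℂ) : ℂ :=
  ∑ l ∈ range (N + 1), hahnWeight l1 l2 N l * f l * g l

theorem hahnInner_hahnOp (f g : ℂ → ℂ) :
    hahnInner l1 l2 N (hahnOp l1 l2 N f) g =
      -∑ l ∈ range N, hahnWeight l1 l2 N l * ((l + l1) * (l - N)) *
        (f (l + 1) - f l) * (g (l + 1) - g l) := by
  have := sum_mul_diffOp_mul N (hahnWeight l1 l2 N) (fun x => (x + l1) * (x - N))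
    (fun x => x * (x - l2 - N)) f g (by ring) (by ring) fun l hl => hahnWeight_succ_mul hl
  simp only [hahnInner, hahnOp, ← this]

theorem hahnInner_hahnOp_comm (f g : ℂ → ℂ) :
    hahnInner l1 l2 N (hahnOp l1 l2 N f) g = hahnInner l1 l2 N (hahnOp l1 l2 N g) f := by
  rw [hahnInner_hahnOp, hahnInner_hahnOp, neg_inj]
  exact sum_congr rfl fun l _ => by ring

end HahnOperator

section HahnPoly

variable (l1 l2 : ℂ) (N : ℕ)

noncomputable def hahnCoeff (k n : ℕ) : ℂ :=
  poch (-k) n * poch (k + l1 + l2 - 1) n / (poch l1 n * poch (-N) n * n.factorial)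

/-- `₃F₂(-k, k + l1 + l2 - 1, -x; l1, -N; 1)`, expanded in the basis `(-x)_n`. -/
noncomputable def hahnPoly (k : ℕ) (x : ℂ) : ℂ :=
  ∑ n ∈ range (k + 1), hahnCoeff l1 l2 N k n * poch (-x) n

theorem hahnQ_eq_hahnPoly (k l : ℕ) : hahnQ l1 l2 N k l = hahnPoly l1 l2 N k l :=
  sum_congr rfl fun n _ => by rw [hahnCoeff]; ring

theorem hahnPoly_zero (x : ℂ) : hahnPoly l1 l2 N 0 x = 1 := by
  simp [hahnPoly, hahnCoeff, poch_zero]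

theorem hahnCoeff_succ (k n : ℕ) :
    hahnCoeff l1 l2 N k (n + 1) = hahnCoeff l1 l2 N k n *
      ((n - k) * (n + k + l1 + l2 - 1) / ((n + 1) * (l1 + n) * (n - N))) := by
  simp only [hahnCoeff, poch_succ_right, Nat.factorial_succ]
  rw [div_mul_div_comm]
  push_cast
  congr 1 <;> ring

theorem hahnCoeff_succ_succ (k n : ℕ) :
    hahnCoeff l1 l2 (N + 1) (k + 1) (n + 1) = (k + 1) * (k + l1 + l2) / (l1 * (N + 1) * (n + 1)) *
      hahnCoeff (l1 + 1) (l2 + 1) N k n := by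
  simp only [hahnCoeff, poch_succ_left, Nat.factorial_succ]
  rw [div_mul_div_comm, ← neg_div_neg_eq]
  push_cast
  congr 1 <;> ring_nf

theorem hahnOp_poch_neg_succ (n : ℕ) (x : ℂ) :
    hahnOp l1 l2 N (fun y => poch (-y) (n + 1)) x =
      (n + 1) * (n + l1 + l2) * poch (-x) (n + 1) - (n + 1) * (l1 + n) * (n - N) * poch (-x) n := by
  have hforward := poch_neg_add_one_sub x n
  have hbackward := poch_neg_add_one_sub (x - 1) n
  have hshift : x * poch (-(x - 1)) n = -poch (-x) (n + 1) := by
    rw [poch_succ_left, neg_sub', sub_neg_eq_add]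
    ring
  have hsucc := poch_succ_right (-x) n
  rw [sub_add_cancel] at hbackward
  simp only [hahnOp]
  linear_combination (x + l1) * (x - N) * hforward - x * (x - l2 - N) * hbackward +
    (x - l2 - N) * (n + 1) * hshift - (n + 1) * (x + n + l1 - N) * hsucc

theorem hahnOp_hahnPoly {k : ℕ} (hk : k ≤ N) (h1 : poch l1 k ≠ 0) (x : ℂ) :
    hahnOp l1 l2 N (hahnPoly l1 l2 N k) x = k * (k + l1 + l2 - 1) * hahnPoly l1 l2 N k x := by
  set A := hahnCoeff l1 l2 N k
  have hrec : ∀ n < k, A (n + 1) * ((n + 1) * (l1 + n) * (n - N)) =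
      A n * ((n - k) * (n + k + l1 + l2 - 1)) := by
    intro n hn
    have hnN : (n : ℂ) - N ≠ 0 := sub_ne_zero.mpr (by exact_mod_cast (by omega : n ≠ N))
    have hden : ((n : ℂ) + 1) * (l1 + n) * (n - N) ≠ 0 :=
      mul_ne_zero (mul_ne_zero (Nat.cast_add_one_ne_zero n) (poch_ne_zero_iff.mp h1 n hn)) hnN
    rw [show A (n + 1) = _ from hahnCoeff_succ l1 l2 N k n, mul_assoc, div_mul_cancel₀ _ hden]
  calc hahnOp l1 l2 N (hahnPoly l1 l2 N k) x
      = ∑ n ∈ range (k + 1), A n * hahnOp l1 l2 N (fun y => poch (-y) n) x := by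
        simp only [hahnOp, hahnPoly, ← sum_sub_distrib, mul_sum, ← sum_add_distrib]
        exact sum_congr rfl fun n _ => by ring
    _ = ∑ n ∈ range k, (A (n + 1) * (n + 1) * (n + l1 + l2) * poch (-x) (n + 1) -
          A n * ((n - k) * (n + k + l1 + l2 - 1)) * poch (-x) n) := by
        have hconst : hahnOp l1 l2 N (fun y => poch (-y) 0) x = 0 := by
          simp only [hahnOp, poch_zero, sub_self, mul_zero, add_zero]
        rw [sum_range_succ', hconst, mul_zero, add_zero]
        refine sum_congr rfl fun n hn => ?_
        rw [hahnOp_poch_neg_succ, ← hrec n (mem_range.mp hn)]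
        ring
    _ = ∑ n ∈ range (k + 1), (A n * (n * (n + l1 + l2 - 1)) * poch (-x) n -
          A n * ((n - k) * (n + k + l1 + l2 - 1)) * poch (-x) n) := by
        rw [sum_sub_distrib, sum_sub_distrib, sum_range_succ' _ k, sum_range_succ _ k]
        simp only [Nat.cast_zero, zero_mul, mul_zero, sub_self, add_zero]
        congr 1
        exact sum_congr rfl fun n _ => by push_cast; ring
    _ = k * (k + l1 + l2 - 1) * hahnPoly l1 l2 N k x := by
        rw [hahnPoly, mul_sum]
        exact sum_congr rfl fun n _ => by ring

theorem hahnPoly_add_one_sub {k : ℕ} (hl1 : l1 ≠ 0) (x : ℂ) :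
    l1 * (N + 1) * (hahnPoly l1 l2 (N + 1) (k + 1) (x + 1) - hahnPoly l1 l2 (N + 1) (k + 1) x) =
      -((k + 1) * (k + l1 + l2)) * hahnPoly (l1 + 1) (l2 + 1) N k x := by
  simp only [hahnPoly, ← sum_sub_distrib, mul_sum]
  rw [sum_range_succ' _ (k + 1)]
  simp only [poch_zero, sub_self, mul_zero, add_zero]
  refine sum_congr rfl fun n _ => ?_
  rw [← mul_sub, poch_neg_add_one_sub, hahnCoeff_succ_succ]
  field_simp

end HahnPoly

section Orthogonality

variable {l1 l2 : ℂ} {N : ℕ}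

theorem hahnInner_comm (f g : ℂ → ℂ) : hahnInner l1 l2 N f g = hahnInner l1 l2 N g f :=
  sum_congr rfl fun l _ => by ring

theorem hahnInner_hahnOp_hahnPoly {k : ℕ} (hk : k ≤ N) (h1 : poch l1 k ≠ 0) (g : ℂ → ℂ) :
    hahnInner l1 l2 N (hahnOp l1 l2 N (hahnPoly l1 l2 N k)) g =
      k * (k + l1 + l2 - 1) * hahnInner l1 l2 N (hahnPoly l1 l2 N k) g := by
  simp only [hahnInner, hahnOp_hahnPoly l1 l2 N hk h1, mul_sum]
  exact sum_congr rfl fun l _ => by ring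

theorem hahnInner_hahnPoly_eq_zero {k k' : ℕ} (hk : k ≤ N) (hk' : k' ≤ N) (h1 : poch l1 k ≠ 0)
    (h1' : poch l1 k' ≠ 0) (hμ : k * (k + l1 + l2 - 1) ≠ k' * (k' + l1 + l2 - 1)) :
    hahnInner l1 l2 N (hahnPoly l1 l2 N k) (hahnPoly l1 l2 N k') = 0 := by
  have hsymm := hahnInner_hahnOp_comm l1 l2 N (hahnPoly l1 l2 N k) (hahnPoly l1 l2 N k')
  rw [hahnInner_hahnOp_hahnPoly hk h1, hahnInner_hahnOp_hahnPoly hk' h1',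
    hahnInner_comm (hahnPoly l1 l2 N k')] at hsymm
  exact (mul_eq_mul_right_iff.mp hsymm).resolve_left hμ

theorem hahnInner_hahnPoly_succ_self {k : ℕ} (hk : k ≤ N) (h1 : poch l1 (k + 1) ≠ 0)
    (hs : k + l1 + l2 ≠ 0) :
    l1 * (N + 1) * hahnInner l1 l2 (N + 1) (hahnPoly l1 l2 (N + 1) (k + 1))
        (hahnPoly l1 l2 (N + 1) (k + 1)) =
      (k + 1) * (k + l1 + l2) * l2 *
        hahnInner (l1 + 1) (l2 + 1) N (hahnPoly (l1 + 1) (l2 + 1) N k)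
          (hahnPoly (l1 + 1) (l2 + 1) N k) := by
  have heigen := hahnInner_hahnOp_hahnPoly (l2 := l2) (N := N + 1) (by omega) h1
    (hahnPoly l1 l2 (N + 1) (k + 1))
  rw [hahnInner_hahnOp] at heigen
  set Q := hahnPoly l1 l2 (N + 1) (k + 1)
  set Q' := hahnPoly (l1 + 1) (l2 + 1) N k
  set μ : ℂ := (k + 1) * (k + l1 + l2)
  have hl1 : l1 ≠ 0 := by
    rw [poch_succ_left] at h1
    exact left_ne_zero_of_mul h1
  have hμ : l1 * (N + 1) * μ ≠ 0 :=
    mul_ne_zero (mul_ne_zero hl1 (Nat.cast_add_one_ne_zero N))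
      (mul_ne_zero (Nat.cast_add_one_ne_zero k) hs)
  refine mul_left_cancel₀ hμ ?_
  calc l1 * (N + 1) * μ * (l1 * (N + 1) * hahnInner l1 l2 (N + 1) Q Q)
      = -((l1 * (N + 1)) ^ 2 * ∑ l ∈ range (N + 1), hahnWeight l1 l2 (N + 1) l *
          ((l + l1) * (l - (N + 1 : ℕ))) * (Q (l + 1) - Q l) * (Q (l + 1) - Q l)) := by
        push_cast at heigen ⊢
        linear_combination -(l1 * (N + 1)) ^ 2 * heigen
    _ = ∑ l ∈ range (N + 1), l1 * (N + 1) * μ * (μ * l2 *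
          (hahnWeight (l1 + 1) (l2 + 1) N l * Q' l * Q' l)) := by
        rw [mul_sum, ← sum_neg_distrib]
        refine sum_congr rfl fun l hl => ?_
        have hΔ := hahnPoly_add_one_sub l1 l2 N (k := k) hl1 l
        rw [hahnWeight_mul_eq (mem_range_succ_iff.mp hl)]
        push_cast
        linear_combination l1 * l2 * (N + 1) * hahnWeight (l1 + 1) (l2 + 1) N l *
          (l1 * (N + 1) * (Q (l + 1) - Q l) - μ * Q' l) * hΔ
    _ = l1 * (N + 1) * μ * (μ * l2 * hahnInner (l1 + 1) (l2 + 1) N Q' Q') := by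
        rw [hahnInner, mul_sum, mul_sum]

theorem hahnInner_hahnPoly_self_mul (k : ℕ) (hk : k ≤ N) (h1 : poch l1 k ≠ 0)
    (hs : poch (l1 + l2 + k - 1) k ≠ 0) :
    hahnInner l1 l2 N (hahnPoly l1 l2 N k) (hahnPoly l1 l2 N k) * (N.choose k * poch l1 k) =
      poch l2 k * poch (l1 + l2 + k - 1) k * poch (l1 + l2 + 2 * k) (N - k) := by
  induction k generalizing l1 l2 N with
  | zero =>
    simp [hahnInner, hahnPoly_zero, poch_zero, sum_hahnWeight]
  | succ k ih =>
    obtain ⟨N, rfl⟩ := Nat.exists_eq_add_of_le' (show 1 ≤ N by omega)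
    rw [show l1 + l2 + ((k + 1 : ℕ) : ℂ) - 1 = k + l1 + l2 by push_cast; ring] at hs ⊢
    obtain ⟨hl1, h1'⟩ : l1 ≠ 0 ∧ poch (l1 + 1) k ≠ 0 := by
      rwa [poch_succ_left, mul_ne_zero_iff] at h1
    obtain ⟨hs, hs'⟩ : (k + l1 + l2 : ℂ) ≠ 0 ∧ poch (k + l1 + l2 + 1) k ≠ 0 := by
      rwa [poch_succ_left, mul_ne_zero_iff] at hs
    have hrec := hahnInner_hahnPoly_succ_self (N := N) (by omega) h1 hs
    have ih' := ih (l1 := l1 + 1) (l2 := l2 + 1) (N := N) (by omega) h1'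
      (by convert hs' using 2; ring)
    rw [show l1 + 1 + (l2 + 1) + (k : ℂ) - 1 = k + l1 + l2 + 1 by ring,
      show l1 + 1 + (l2 + 1) + 2 * (k : ℂ) = l1 + l2 + 2 * (k + 1 : ℕ) by push_cast; ring] at ih'
    have hchoose : ((N + 1).choose (k + 1) : ℂ) * (k + 1) = (N + 1) * N.choose k := by
      exact_mod_cast (Nat.add_one_mul_choose_eq N k).symm
    rw [poch_succ_left l1, poch_succ_left l2, poch_succ_left (k + l1 + l2), Nat.add_sub_add_right]
    refine mul_left_cancel₀ (Nat.cast_add_one_ne_zero k) ?_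
    linear_combination
      hahnInner l1 l2 (N + 1) (hahnPoly l1 l2 (N + 1) (k + 1)) (hahnPoly l1 l2 (N + 1) (k + 1)) *
        l1 * poch (l1 + 1) k * hchoose + N.choose k * poch (l1 + 1) k * hrec +
      (k + 1) * (k + l1 + l2) * l2 * ih'

theorem sum_hahnQ_mul_hahnQt (k k' : ℕ) :
    ∑ l ∈ range (N + 1), hahnQ l1 l2 N k l * hahnQt l1 l2 N k' l =
      N.choose k' * poch l1 k' * poch (l1 + l2) N /
          (poch l2 k' * poch (l1 + l2 + k' - 1) k' * poch (l1 + l2 + 2 * k') (N - k')) /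
        poch l2 N * hahnInner l1 l2 N (hahnPoly l1 l2 N k) (hahnPoly l1 l2 N k') := by
  rw [hahnInner, mul_sum]
  refine sum_congr rfl fun l _ => ?_
  simp only [hahnQt, hahnQ_eq_hahnPoly, hahnWeight]
  ring

theorem sum_hahnQ_mul_hahnQt_self {k : ℕ} (hk : k ≤ N) (h1 : poch l1 k ≠ 0) (h2 : poch l2 N ≠ 0)
    (hs : poch (l1 + l2 + k - 1) k ≠ 0) (hs' : poch (l1 + l2 + 2 * k) (N - k) ≠ 0) :
    ∑ l ∈ range (N + 1), hahnQ l1 l2 N k l * hahnQt l1 l2 N k l = poch (l1 + l2) N / poch l2 N := by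
  have hnorm := hahnInner_hahnPoly_self_mul k hk h1 hs
  have hD := mul_ne_zero (mul_ne_zero (poch_ne_zero_of_le hk h2) hs) hs'
  rw [sum_hahnQ_mul_hahnQt, div_div, div_mul_eq_mul_div, div_eq_div_iff (mul_ne_zero hD h2) h2]
  linear_combination poch (l1 + l2) N * poch l2 N * hnorm

theorem sum_hahnQ_mul_hahnQt_eq_ite (h1 : poch l1 N ≠ 0) (h2 : poch l2 N ≠ 0)
    (hs : ∀ j : ℕ, j ≤ 2 * N - 2 → l1 + l2 + j ≠ 0) (k k' : ℕ) (hk : k ≤ N) (hk' : k' ≤ N) :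
    ∑ l ∈ range (N + 1), hahnQ l1 l2 N k l * hahnQt l1 l2 N k' l =
      if k = k' then poch (l1 + l2) N / poch l2 N else 0 := by
  split_ifs with hkk
  · subst hkk
    refine sum_hahnQ_mul_hahnQt_self hk (poch_ne_zero_of_le hk h1) h2
      (poch_ne_zero_iff.mpr fun i hi => ?_) (poch_ne_zero_iff.mpr fun i hi => ?_)
    · convert hs (k - 1 + i) (by omega) using 1
      push_cast [Nat.cast_sub (show 1 ≤ k by omega)]
      ring
    · convert hs (2 * k + i) (by omega) using 1
      push_cast
      ring
  · rw [sum_hahnQ_mul_hahnQt, hahnInner_hahnPoly_eq_zero hk hk' (poch_ne_zero_of_le hk h1)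
      (poch_ne_zero_of_le hk' h1), mul_zero]
    intro hμ
    have hfactor : ((k : ℂ) - k') * (l1 + l2 + (k + k' - 1 : ℕ)) = 0 := by
      push_cast [Nat.cast_sub (show 1 ≤ k + k' by omega)]
      linear_combination hμ
    rcases mul_eq_zero.mp hfactor with h | h
    · exact hkk (by exact_mod_cast sub_eq_zero.mp h)
    · exact hs _ (by omega) h

end Orthogonality

theorem dual_orthogonality {K : Type*} [Field K] {n : ℕ} (f g : ℕ → ℕ → K) {c : K} (hc : c ≠ 0)
    (h : ∀ i j, i ≤ n → j ≤ n → ∑ l ∈ range (n + 1), f i l * g j l = if i = j then c else 0) :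
    ∀ l l', l ≤ n → l' ≤ n → ∑ i ∈ range (n + 1), f i l * g i l' = if l = l' then c else 0 := by
  let A : Matrix (Fin (n + 1)) (Fin (n + 1)) K := Matrix.of fun i l => f i l
  let B : Matrix (Fin (n + 1)) (Fin (n + 1)) K := Matrix.of fun l j => g j l / c
  have hAB : A * B = 1 := by
    ext i j
    simp only [A, B, Matrix.mul_apply, Matrix.of_apply, Matrix.one_apply, ← mul_div_assoc,
      ← sum_div, Fin.sum_univ_eq_sum_range (fun l => f i l * g j l) (n + 1),
      h i j (by omega) (by omega), Fin.ext_iff]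
    split_ifs <;> simp [hc]
  intro l l' hl hl'
  have hBA := Matrix.ext_iff.mpr (mul_eq_one_comm.mp hAB) ⟨l', by omega⟩ ⟨l, by omega⟩
  simp only [A, B, Matrix.mul_apply, Matrix.of_apply, Matrix.one_apply, div_mul_eq_mul_div,
    ← sum_div, Fin.sum_univ_eq_sum_range (fun i => g i l' * f i l) (n + 1), Fin.ext_iff] at hBA
  rw [div_eq_iff hc] at hBA
  simp only [mul_comm (f _ l), hBA, eq_comm (a := l)]
  split_ifs <;> simp

theorem hahn_orthogonality_general (lam1 lam2 : ℂ) (N : ℕ)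
    (h1 : ∀ j : ℕ, j < N → lam1 ≠ -(j : ℂ))
    (h2 : ∀ j : ℕ, j < N → lam2 ≠ -(j : ℂ))
    (h12 : ∀ j : ℕ, j ≤ 2 * N - 2 → lam1 + lam2 ≠ -(j : ℂ)) :
    (∀ l l' : ℕ, l ≤ N → l' ≤ N →
      ∑ k ∈ range (N + 1), hahnQ lam1 lam2 N k l * hahnQt lam1 lam2 N k l' =
        if l = l' then poch (lam1 + lam2) N / poch lam2 N else 0) ∧
    (∀ k k' : ℕ, k ≤ N → k' ≤ N →
      ∑ l ∈ range (N + 1), hahnQ lam1 lam2 N k l * hahnQt lam1 lam2 N k' l =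
        if k = k' then poch (lam1 + lam2) N / poch lam2 N else 0) := by
  have hl1 : poch lam1 N ≠ 0 :=
    poch_ne_zero_iff.mpr fun i hi h => h1 i hi (eq_neg_of_add_eq_zero_left h)
  have hl2 : poch lam2 N ≠ 0 :=
    poch_ne_zero_iff.mpr fun i hi h => h2 i hi (eq_neg_of_add_eq_zero_left h)
  have hs (j : ℕ) (hj : j ≤ 2 * N - 2) : lam1 + lam2 + j ≠ 0 := fun h =>
    h12 j hj (eq_neg_of_add_eq_zero_left h)
  have hc : poch (lam1 + lam2) N / poch lam2 N ≠ 0 :=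
    div_ne_zero (poch_ne_zero_iff.mpr fun i hi => hs i (by omega)) hl2
  have rows := sum_hahnQ_mul_hahnQt_eq_ite hl1 hl2 hs
  exact ⟨dual_orthogonality _ _ hc rows, rows⟩

theorem hahn_orthogonality (lam1 lam2 : ℂ) (N : ℕ) (hN : 0 < N)
    (h1 : ∀ j : ℕ, j < N → lam1 ≠ -(j : ℂ))
    (h2 : ∀ j : ℕ, j < N → lam2 ≠ -(j : ℂ))
    (h12 : ∀ j : ℕ, j ≤ 2 * N - 2 → lam1 + lam2 ≠ -(j : ℂ)) :
    (∀ l l' : ℕ, l ≤ N → l' ≤ N →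
      ∑ k ∈ range (N + 1), hahnQ lam1 lam2 N k l * hahnQt lam1 lam2 N k l' =
        if l = l' then poch (lam1 + lam2) N / poch lam2 N else 0) ∧
    (∀ k k' : ℕ, k ≤ N → k' ≤ N →
      ∑ l ∈ range (N + 1), hahnQ lam1 lam2 N k l * hahnQt lam1 lam2 N k' l =
        if k = k' then poch (lam1 + lam2) N / poch lam2 N else 0) :=
  hahn_orthogonality_general lam1 lam2 N h1 h2 h12
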